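/- For every ternary tree T with n nodes, the word φ(T) produced by the recursive map φ (φ(empty) = ε, φ(node(A,B,C)) = B₁ · φ(A) · H · B₂ · U · φ(C) · D, with φ(B) = B₁B₂ split at the last U of φ(B)) is an S-Motzkin path of length 3n. -/
import Mathlib


/-- The three step types of a Motzkin path: H = (1,0), U = (1,1), D = (1,-1). -/
inductive Step : Type | H | U | D
deriving DecidableEq, Repr

/-- A ternary tree: either empty, or a node with left, middle and right subtrees. -/
inductive TernaryTree : Type
  | leaf : TernaryTree
  | node : TernaryTree → TernaryTree → TernaryTree → TernaryTree

/-- The number of nodes of a ternary tree. -/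
def TernaryTree.size : TernaryTree → ℕ
  | .leaf => 0
  | .node a b c => 1 + a.size + b.size + c.size

/-- An S-Motzkin path (prefix characterization, any length): equal numbers of each
letter and every prefix p satisfies #D(p) ≤ #U(p) ≤ #H(p) ≤ #U(p) + 1. -/
def SMP (w : List Step) : Prop :=
  w.count Step.H = w.count Step.U ∧ w.count Step.U = w.count Step.D ∧
  ∀ p : List Step, p <+: w →
    p.count Step.D ≤ p.count Step.U ∧ p.count Step.U ≤ p.count Step.H ∧
      p.count Step.H ≤ p.count Step.U + 1

/-- The prefix of w ending at the last U step of w (empty if w has no U). -/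
def firstPart (w : List Step) : List Step :=
  (w.reverse.dropWhile (fun s => s != Step.U)).reverse

/-- The suffix of w after its last U step (all of w if w has no U). -/
def secondPart (w : List Step) : List Step :=
  (w.reverse.takeWhile (fun s => s != Step.U)).reverse

/-- The recursive map from ternary trees to words over {H, U, D}:
φ(empty) = ε and φ(node(A,B,C)) = B₁ · φ(A) · H · B₂ · U · φ(C) · D,
where φ(B) = B₁ · B₂ is split at the last U of φ(B). -/
def phi : TernaryTree → List Step
  | .leaf => []
  | .node a b c =>
      firstPart (phi b) ++ phi a ++ Step.H ::
        (secondPart (phi b) ++ Step.U :: (phi c ++ [Step.D]))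

lemma prefix_append_cases {α : Type*} {p x y : List α} (h : p <+: x ++ y) :
    p <+: x ∨ ∃ q, q <+: y ∧ p = x ++ q := by
  obtain ⟨t, ht⟩ := h
  by_cases hl : p.length ≤ x.length
  · exact Or.inl (List.prefix_of_prefix_length_le ⟨t, ht⟩ (x.prefix_append y) hl)
  · right
    have hx : x <+: p :=
      List.prefix_of_prefix_length_le (x.prefix_append y) ⟨t, ht⟩ (le_of_not_ge hl)
    obtain ⟨q, hq⟩ := hx
    refine ⟨q, ⟨t, ?_⟩, hq.symm⟩
    have : x ++ (q ++ t) = x ++ y := by rw [← List.append_assoc, hq, ht]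
    exact List.append_cancel_left this

lemma count_le_of_prefix {p w : List Step} (h : p <+: w) (a : Step) :
    p.count a ≤ w.count a := h.sublist.count_le a

lemma firstPart_append_secondPart (w : List Step) :
    firstPart w ++ secondPart w = w := by
  unfold firstPart secondPart
  rw [← List.reverse_append, List.takeWhile_append_dropWhile, List.reverse_reverse]

lemma firstPart_prefix (w : List Step) : firstPart w <+: w :=
  ⟨secondPart w, firstPart_append_secondPart w⟩

lemma secondPart_count_U (w : List Step) : (secondPart w).count Step.U = 0 := by
  rw [List.count_eq_zero]
  intro h
  have := List.mem_takeWhile_imp (List.mem_reverse.mp h)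
  simp at this

theorem phi_smotzkin (T : TernaryTree) :
    SMP (phi T) ∧ (phi T).length = 3 * T.size := by
  induction T with
  | leaf =>
    refine ⟨⟨rfl, rfl, fun p hp => ?_⟩, rfl⟩
    have : p = [] := List.prefix_nil.mp hp
    subst this; simp
  | node a b c iha ihb ihc =>
    obtain ⟨⟨haHU, haUD, haP⟩, haL⟩ := iha
    obtain ⟨⟨hbHU, hbUD, hbP⟩, hbL⟩ := ihb
    obtain ⟨⟨hcHU, hcUD, hcP⟩, hcL⟩ := ihc
    set f := firstPart (phi b) with hf
    set s := secondPart (phi b) with hs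
    have hfs : f ++ s = phi b := firstPart_append_secondPart (phi b)
    have hsU : s.count Step.U = 0 := secondPart_count_U (phi b)
    have hcount : ∀ x : Step, f.count x + s.count x = (phi b).count x := by
      intro x; rw [← hfs, List.count_append]
    have hfU : f.count Step.U = (phi b).count Step.U := by
      have := hcount Step.U; omega
    have hfpre : f <+: phi b := firstPart_prefix (phi b)
    obtain ⟨hfD', hfUH, hfHU1⟩ := hbP f hfpre
    have hfH : f.count Step.H = (phi b).count Step.U := by
      have h1 := hcount Step.H; omega
    have hsH : s.count Step.H = 0 := by
      have h1 := hcount Step.H; omega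
    have hfsD : f.count Step.D + s.count Step.D = (phi b).count Step.U := by
      have h1 := hcount Step.D; omega
    have hlen : f.length + s.length = (phi b).length := by
      rw [← hfs, List.length_append]
    have hword : phi (.node a b c) =
        f ++ (phi a ++ ([Step.H] ++ (s ++ ([Step.U] ++ (phi c ++ [Step.D]))))) := by
      simp [phi, ← hf, ← hs, List.append_assoc]
    refine ⟨⟨?_, ?_, ?_⟩, ?_⟩
    · rw [hword]; simp [List.count_append, List.count_cons]; omega
    · rw [hword]; simp [List.count_append, List.count_cons]; omega
    · intro p hp
      rw [hword] at hp
      rcases prefix_append_cases hp with h1 | ⟨q, hq, rfl⟩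
      · exact hbP p (h1.trans hfpre)
      rcases prefix_append_cases hq with h2 | ⟨r, hr, rfl⟩
      · obtain ⟨hqD, hqUH, hqHU⟩ := haP q h2
        simp [List.count_append]; omega
      rcases prefix_append_cases hr with h3 | ⟨r2, hr2, rfl⟩
      · have hU := count_le_of_prefix h3 Step.U
        have hD := count_le_of_prefix h3 Step.D
        have hH := count_le_of_prefix h3 Step.H
        simp [List.count_cons] at hU hD hH
        simp [List.count_append]; omega
      rcases prefix_append_cases hr2 with h4 | ⟨r3, hr3, rfl⟩
      · have hU := count_le_of_prefix h4 Step.U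
        have hD := count_le_of_prefix h4 Step.D
        have hH := count_le_of_prefix h4 Step.H
        simp [List.count_append, List.count_cons]; omega
      rcases prefix_append_cases hr3 with h5 | ⟨r4, hr4, rfl⟩
      · have hU := count_le_of_prefix h5 Step.U
        have hD := count_le_of_prefix h5 Step.D
        have hH := count_le_of_prefix h5 Step.H
        simp [List.count_cons] at hU hD hH
        simp [List.count_append, List.count_cons]; omega
      rcases prefix_append_cases hr4 with h6 | ⟨r5, hr5, rfl⟩
      · obtain ⟨hqD, hqUH, hqHU⟩ := hcP r4 h6
        simp [List.count_append, List.count_cons]; omega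
      · have hU := count_le_of_prefix hr5 Step.U
        have hD := count_le_of_prefix hr5 Step.D
        have hH := count_le_of_prefix hr5 Step.H
        simp [List.count_cons] at hU hD hH
        simp [List.count_append, List.count_cons]; omega
    · rw [hword]; simp [List.length_append, TernaryTree.size]; omega
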